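/- Let n ≥ 2, 0 < s < 1, ρ > 0, let H be a symmetric n×n real matrix and M a symmetric positive definite n×n real matrix. Then ∫_{B_ρ(0)} ⟨H √M y, √M y⟩ |y|^{−(n+2s)} dy = (ρ^{2−2s}/(2−2s)) · ω_n · trace(M·H), where B_ρ(0) is the Euclidean ball of radius ρ centered at the origin in ℝ^n. -/

import Mathlib

open MeasureTheory Matrix Filter Metric Set
open scoped RealInnerProductSpace Classical

noncomputable section

abbrev E (n : ℕ) := EuclideanSpace ℝ (Fin n)

/-- second difference δ(u,x,y) = u(x+y) + u(x−y) − 2u(x) -/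
def ddelta {n : ℕ} (u : E n → ℝ) (x y : E n) : ℝ := u (x + y) + u (x - y) - 2 * u x

/-- apply a matrix to a Euclidean vector -/
def mApp {n : ℕ} (M : Matrix (Fin n) (Fin n) ℝ) (y : E n) : E n :=
  (WithLp.equiv 2 (Fin n → ℝ)).symm (M.mulVec ((WithLp.equiv 2 (Fin n → ℝ)) y))

/-- the positive definite square root of a positive definite matrix (junk value `1` otherwise) -/
def msqrt {n : ℕ} (M : Matrix (Fin n) (Fin n) ℝ) : Matrix (Fin n) (Fin n) ℝ :=
  if h : M.PosDef then
    (h.posSemidef.1.eigenvectorUnitary : Matrix (Fin n) (Fin n) ℝ) *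
      diagonal (Real.sqrt ∘ h.posSemidef.1.eigenvalues) *
      (star h.posSemidef.1.eigenvectorUnitary : Matrix (Fin n) (Fin n) ℝ)
  else 1

/-- largest eigenvalue of a symmetric matrix -/
def lamMax {n : ℕ} (M : Matrix (Fin n) (Fin n) ℝ) : ℝ :=
  if h : M.IsHermitian then ⨆ i, h.eigenvalues i else 0

/-- smallest eigenvalue of a symmetric matrix -/
def lamMin {n : ℕ} (M : Matrix (Fin n) (Fin n) ℝ) : ℝ :=
  if h : M.IsHermitian then ⨅ i, h.eigenvalues i else 0

/-- the eigenvalue vector λ(A) of a symmetric matrix (junk value `0` otherwise) -/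
def eigenv {n : ℕ} (A : Matrix (Fin n) (Fin n) ℝ) : Fin n → ℝ :=
  if h : A.IsHermitian then h.eigenvalues else 0

/-- ω_n : volume of the unit ball in ℝ^n -/
def omegaN (n : ℕ) : ℝ := (volume (ball (0 : E n) 1)).toReal

/-- u is Lipschitz with constant L -/
def LipWith {n : ℕ} (L : ℝ) (u : E n → ℝ) : Prop := ∀ x y, |u x - u y| ≤ L * ‖x - y‖

/-- u is semiconcave with constant SC -/
def SemiconcaveWith {n : ℕ} (SC : ℝ) (u : E n → ℝ) : Prop :=
  ∀ x y, ddelta u x y ≤ SC * ‖y‖ ^ 2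

/-- the quantity (1/2) ∫ δ(u,x,y) |√M⁻¹ y|^{−(n+2s)} det (√M⁻¹) dy -/
def kernelInt {n : ℕ} (s : ℝ) (M : Matrix (Fin n) (Fin n) ℝ) (u : E n → ℝ) (x : E n) : ℝ :=
  (1/2) * ∫ y : E n, ddelta u x y / ‖mApp (msqrt M)⁻¹ y‖ ^ ((n : ℝ) + 2*s) * ((msqrt M)⁻¹).det

/-- elementary symmetric polynomial σ_j in n variables -/
def esymmP (n j : ℕ) (x : Fin n → ℝ) : ℝ :=
  ∑ A ∈ Finset.univ.powersetCard j, ∏ i ∈ A, x i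

/-- the cone Γ_k -/
def GammaK (n k : ℕ) : Set (Fin n → ℝ) := {x | ∀ j, 1 ≤ j → j ≤ k → 0 < esymmP n j x}

/-- σ_k of a matrix, as a polynomial of the entries (σ_k(T) = σ_k(λ(T)) for symmetric T) -/
def sigmaMat (n k : ℕ) (T : Matrix (Fin n) (Fin n) ℝ) : ℝ :=
  (-1)^k * T.charpoly.coeff (n - k)

/-- the family 𝓜_k of matrices D(σ_k^{1/k})(T), T symmetric with λ(T) ∈ Γ_k -/
def MM (n k : ℕ) : Set (Matrix (Fin n) (Fin n) ℝ) :=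
  {M | ∃ T : Matrix (Fin n) (Fin n) ℝ, T.IsSymm ∧ eigenv T ∈ GammaK n k ∧
    M = Matrix.of fun i j => (1/(k:ℝ)) * sigmaMat n k T ^ ((1 - (k:ℝ))/(k:ℝ)) *
      deriv (fun t : ℝ => sigmaMat n k (T + t • Matrix.single i j 1)) 0}

/-- the fractional k-Hessian operator F_s[u](x) -/
def FsK {n : ℕ} (k : ℕ) (s : ℝ) (u : E n → ℝ) (x : E n) : ℝ :=
  sInf ((fun M => kernelInt s M u x) '' MM n k)

/-- the strictly elliptic fractional k-Hessian operator F_s^θ[u](x) -/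
def FsKtheta {n : ℕ} (k : ℕ) (s θ : ℝ) (u : E n → ℝ) (x : E n) : ℝ :=
  sInf ((fun M => kernelInt s M u x) '' {M | M ∈ MM n k ∧ θ ≤ lamMin M})

/-- the Hessian matrix D²u(x) -/
def hess {n : ℕ} (u : E n → ℝ) (x : E n) : Matrix (Fin n) (Fin n) ℝ :=
  Matrix.of fun i j =>
    fderiv ℝ (fun z => fderiv ℝ u z (EuclideanSpace.single j (1:ℝ))) x (EuclideanSpace.single i (1:ℝ))

/-- F(A) = f(λ(A)), extended to all matrices by symmetrization -/
def Fgen {n : ℕ} (f : (Fin n → ℝ) → ℝ) (A : Matrix (Fin n) (Fin n) ℝ) : ℝ :=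
  f (eigenv ((1/2 : ℝ) • (A + Aᵀ)))

/-- DF(A) : the matrix of partial derivatives {∂F/∂A_{ij}(A)} -/
def DFgen {n : ℕ} (f : (Fin n → ℝ) → ℝ) (T : Matrix (Fin n) (Fin n) ℝ) :
    Matrix (Fin n) (Fin n) ℝ :=
  Matrix.of fun i j => deriv (fun t : ℝ => Fgen f (T + t • Matrix.single i j 1)) 0

end

section auxlemmas
open scoped ENNReal

lemma aux_coord {n : ℕ} (y : E n) (i : Fin n) : |y i| ≤ ‖y‖ := by
  rw [EuclideanSpace.norm_eq, ← Real.sqrt_sq_eq_abs]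
  apply Real.sqrt_le_sqrt
  calc y i ^ 2 = ‖y i‖ ^ 2 := by rw [Real.norm_eq_abs, sq_abs]
    _ ≤ _ := Finset.single_le_sum (f := fun j => ‖y j‖ ^ 2)
        (fun j _ => sq_nonneg _) (Finset.mem_univ i)

lemma aux_int {n : ℕ} (npos : 0 < n) {p : ℝ} (hp1 : -(n:ℝ) < p) (hp2 : p < 0) (ρ : ℝ) :
    MeasureTheory.IntegrableOn (fun y : E n => ‖y‖ ^ p) (ball (0 : E n) ρ) := by
  have hmeas : Measurable (fun y : E n => ‖y‖ ^ p) := by fun_prop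
  have hnn : ∀ y : E n, 0 ≤ ‖y‖ ^ p := fun y => Real.rpow_nonneg (norm_nonneg y) p
  refine ⟨hmeas.aestronglyMeasurable, ?_⟩
  rw [hasFiniteIntegral_iff_ofReal (ae_of_all _ hnn)]
  rw [lintegral_eq_lintegral_meas_le _ (ae_of_all _ hnn) hmeas.aemeasurable]
  set μr := volume.restrict (ball (0 : E n) ρ) with hμr
  have key : ∀ t : ℝ, t ∈ Ioi (1:ℝ) →
      μr {a : E n | t ≤ ‖a‖ ^ p} ≤ ENNReal.ofReal (t ^ (p⁻¹ * n)) * volume (ball (0:E n) 1) := by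
    intro t ht
    have ht0 : (0:ℝ) < t := lt_trans one_pos ht
    have hsub : {a : E n | t ≤ ‖a‖ ^ p} ⊆ closedBall (0 : E n) (t ^ p⁻¹) := by
      intro a ha
      simp only [Set.mem_setOf_eq] at ha
      have h0 : a ≠ 0 := by
        rintro rfl
        rw [norm_zero, Real.zero_rpow hp2.ne] at ha
        exact absurd ha (not_le.2 ht0)
      have hna : 0 < ‖a‖ := norm_pos_iff.2 h0
      rw [mem_closedBall_zero_iff]
      exact (Real.le_rpow_inv_iff_of_neg hna ht0 hp2).2 ha
    calc μr {a : E n | t ≤ ‖a‖ ^ p} ≤ volume (closedBall (0 : E n) (t ^ p⁻¹)) :=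
          le_trans (MeasureTheory.Measure.restrict_apply_le _ _) (measure_mono hsub)
      _ = ENNReal.ofReal ((t ^ p⁻¹) ^ Module.finrank ℝ (E n)) * volume (ball (0:E n) 1) :=
          MeasureTheory.Measure.addHaar_closedBall _ _ (Real.rpow_nonneg ht0.le _)
      _ = ENNReal.ofReal (t ^ (p⁻¹ * n)) * volume (ball (0:E n) 1) := by
          rw [← Real.rpow_natCast (t ^ p⁻¹), ← Real.rpow_mul ht0.le, finrank_euclideanSpace_fin]
  calc ∫⁻ t in Ioi (0:ℝ), μr {a : E n | t ≤ ‖a‖ ^ p}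
      ≤ (∫⁻ t in Ioc (0:ℝ) 1, μr {a : E n | t ≤ ‖a‖ ^ p})
        + ∫⁻ t in Ioi (1:ℝ), μr {a : E n | t ≤ ‖a‖ ^ p} :=
        le_trans (lintegral_mono_set Ioi_subset_Ioc_union_Ioi) (lintegral_union_le _ _ _)
    _ < ∞ := by
        refine ENNReal.add_lt_top.2 ⟨?_, ?_⟩
        · calc (∫⁻ t in Ioc (0:ℝ) 1, μr {a : E n | t ≤ ‖a‖ ^ p})
              ≤ ∫⁻ _ in Ioc (0:ℝ) 1, volume (ball (0:E n) ρ) :=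
                lintegral_mono fun t => le_trans (measure_mono (subset_univ _))
                  (le_of_eq (MeasureTheory.Measure.restrict_apply_univ _))
            _ = volume (ball (0:E n) ρ) * volume (Ioc (0:ℝ) 1) := setLIntegral_const _ _
            _ < ∞ := ENNReal.mul_lt_top measure_ball_lt_top (by simp)
        · have hlt : p⁻¹ * n < -1 := by
            rw [mul_comm, ← div_eq_mul_inv, div_lt_iff_of_neg hp2]
            linarith
          calc (∫⁻ t in Ioi (1:ℝ), μr {a : E n | t ≤ ‖a‖ ^ p})
              ≤ ∫⁻ t in Ioi (1:ℝ), ENNReal.ofReal (t ^ (p⁻¹ * n)) * volume (ball (0:E n) 1) :=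
                setLIntegral_mono' measurableSet_Ioi key
            _ = (∫⁻ t in Ioi (1:ℝ), ENNReal.ofReal (t ^ (p⁻¹ * n))) * volume (ball (0:E n) 1) := by
                rw [lintegral_mul_const' _ _ measure_ball_lt_top.ne]
            _ < ∞ := ENNReal.mul_lt_top
                ((integrableOn_Ioi_rpow_of_lt hlt one_pos).setLIntegral_lt_top)
                measure_ball_lt_top

lemma aux_val {n : ℕ} (npos : 0 < n) {p : ℝ} (hp1 : -(n:ℝ) < p) {ρ : ℝ} (hρ : 0 < ρ) :
    ∫ y in ball (0 : E n) ρ, ‖y‖ ^ p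
      = n * (volume (ball (0:E n) 1)).toReal * (ρ ^ (p + n) / (p + n)) := by
  haveI : Nonempty (Fin n) := ⟨⟨0, npos⟩⟩
  haveI : Nontrivial (E n) := ⟨0, EuclideanSpace.single ⟨0, npos⟩ (1:ℝ), by
    intro h
    have := congrArg (fun v : E n => v ⟨0, npos⟩) h.symm
    simp [EuclideanSpace.single_apply] at this⟩
  rw [← MeasureTheory.integral_indicator measurableSet_ball]
  have hcong : ∀ y : E n, indicator (ball (0:E n) ρ) (fun y => ‖y‖ ^ p) y
      = (fun r : ℝ => indicator (Iio ρ) (fun r => r ^ p) r) ‖y‖ := by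
    intro y
    simp only [indicator_apply, mem_ball_zero_iff, mem_Iio]
  rw [funext hcong,
    MeasureTheory.integral_fun_norm_addHaar volume
      (fun r : ℝ => indicator (Iio ρ) (fun r => r ^ p) r),
    finrank_euclideanSpace_fin]
  have hq : -1 < ((n - 1 : ℕ) : ℝ) + p := by
    rw [Nat.cast_sub npos, Nat.cast_one]
    linarith
  have hq1 : ((n - 1 : ℕ) : ℝ) + p + 1 = p + n := by
    rw [Nat.cast_sub npos, Nat.cast_one]; ring
  have hinner : (∫ r in Ioi (0:ℝ), r ^ (n - 1) • indicator (Iio ρ) (fun r => r ^ p) r)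
      = ρ ^ (p + n) / (p + n) := by
    have h1 : ∀ r ∈ Ioi (0:ℝ), r ^ (n - 1) • indicator (Iio ρ) (fun r => r ^ p) r
        = indicator (Iio ρ) (fun r : ℝ => r ^ (((n - 1 : ℕ) : ℝ) + p)) r := by
      intro r hr
      rw [mem_Ioi] at hr
      simp only [indicator_apply, mem_Iio, smul_eq_mul]
      split_ifs with h
      · rw [Real.rpow_add hr, Real.rpow_natCast]
      · exact mul_zero _
    rw [MeasureTheory.setIntegral_congr_fun measurableSet_Ioi h1,
      MeasureTheory.setIntegral_indicator measurableSet_Iio, Set.Ioi_inter_Iio,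
      ← MeasureTheory.integral_Ioc_eq_integral_Ioo, ← intervalIntegral.integral_of_le hρ.le,
      integral_rpow (Or.inl hq), hq1,
      Real.zero_rpow (ne_of_gt (by linarith : (0:ℝ) < p + n))]
    ring
  rw [hinner]
  simp only [nsmul_eq_mul, smul_eq_mul]
  rw [measureReal_def]
  ring

lemma aux_offdiag {n : ℕ} (α ρ : ℝ) {i j : Fin n} (hij : i ≠ j) :
    ∫ y in ball (0 : E n) ρ, y i * y j / ‖y‖ ^ α = 0 := by
  set g : E n → ℝ := fun y => y i * y j / ‖y‖ ^ α with hg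
  set T : E n ≃ₗᵢ[ℝ] E n := LinearIsometryEquiv.piLpCongrRight 2
    (fun k => if k = i then LinearIsometryEquiv.neg ℝ else LinearIsometryEquiv.refl ℝ ℝ) with hT
  have happ : ∀ (y : E n) (k : Fin n), T y k = if k = i then -(y k) else y k := by
    intro y k
    rw [hT, LinearIsometryEquiv.piLpCongrRight_apply]
    rw [PiLp.toLp_apply]
    rw [apply_ite (fun (f : ℝ ≃ₗᵢ[ℝ] ℝ) => f (y k))]
    simp
  have hball : ⇑T ⁻¹' (ball (0:E n) ρ) = ball (0:E n) ρ := by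
    ext z
    simp only [Set.mem_preimage, mem_ball_zero_iff, T.norm_map]
  have h1 : ∫ y in ball (0:E n) ρ, g y = ∫ y in ball (0:E n) ρ, g (T y) := by
    conv_lhs => rw [← T.measurePreserving.setIntegral_preimage_emb
      T.toHomeomorph.measurableEmbedding g (ball 0 ρ), hball]
  have h2 : ∀ y : E n, g (T y) = -(g y) := by
    intro y
    simp only [hg, T.norm_map, happ]
    rw [if_true, if_neg (fun h => hij h.symm)]
    ring
  simp only [h2, MeasureTheory.integral_neg] at h1
  linarith

lemma aux_diag {n : ℕ} (α ρ : ℝ) (i j : Fin n) :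
    ∫ y in ball (0 : E n) ρ, y i * y i / ‖y‖ ^ α
      = ∫ y in ball (0 : E n) ρ, y j * y j / ‖y‖ ^ α := by
  set g : E n → ℝ := fun y => y i * y i / ‖y‖ ^ α with hg
  set T : E n ≃ₗᵢ[ℝ] E n := LinearIsometryEquiv.piLpCongrLeft 2 ℝ ℝ (Equiv.swap i j) with hT
  have happ : ∀ (y : E n) (k : Fin n), T y k = y (Equiv.swap i j k) := by
    intro y k
    rw [hT, LinearIsometryEquiv.piLpCongrLeft_apply]
    simp [Equiv.piCongrLeft'_apply]
  have hball : ⇑T ⁻¹' (ball (0:E n) ρ) = ball (0:E n) ρ := by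
    ext z
    simp only [Set.mem_preimage, mem_ball_zero_iff, T.norm_map]
  have h1 : ∫ y in ball (0:E n) ρ, g y = ∫ y in ball (0:E n) ρ, g (T y) := by
    conv_lhs => rw [← T.measurePreserving.setIntegral_preimage_emb
      T.toHomeomorph.measurableEmbedding g (ball 0 ρ), hball]
  have h2 : ∀ y : E n, g (T y) = y j * y j / ‖y‖ ^ α := by
    intro y
    simp only [hg, T.norm_map, happ]
    rw [Equiv.swap_apply_left]
  rw [h1]
  exact MeasureTheory.setIntegral_congr_fun measurableSet_ball fun y _ => h2 y

end auxlemmas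


theorem stmt_2 (n : ℕ) (hn : 2 ≤ n) (s : ℝ) (hs0 : 0 < s) (hs1 : s < 1)
    (ρ : ℝ) (hρ : 0 < ρ) (H M : Matrix (Fin n) (Fin n) ℝ) (hH : H.IsSymm) (hM : M.PosDef) :
    (∫ y in ball (0 : E n) ρ,
        ⟪mApp H (mApp (msqrt M) y), mApp (msqrt M) y⟫ / ‖y‖ ^ ((n:ℝ) + 2*s))
      = ρ ^ (2 - 2*s) / (2 - 2*s) * omegaN n * Matrix.trace (M * H) := by
  classical
  have npos : 0 < n := lt_of_lt_of_le two_pos hn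
  have hn2 : (2:ℝ) ≤ (n:ℝ) := by exact_mod_cast hn
  set α : ℝ := (n:ℝ) + 2*s with hα
  set p : ℝ := 2 - α with hp
  have hp2 : p < 0 := by rw [hp, hα]; linarith
  have hp1 : -(n:ℝ) < p := by rw [hp, hα]; linarith
  have hMpsd : M.PosSemidef := hM.posSemidef
  set S : Matrix (Fin n) (Fin n) ℝ := msqrt M with hS
  have hSdef : S = (hMpsd.1.eigenvectorUnitary : Matrix (Fin n) (Fin n) ℝ) *
      diagonal (Real.sqrt ∘ hMpsd.1.eigenvalues) *
      (star hMpsd.1.eigenvectorUnitary : Matrix (Fin n) (Fin n) ℝ) := by rw [hS, msqrt, dif_pos hM]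
  have hSsymm : Sᵀ = S := by
    rw [hSdef, Matrix.transpose_mul, Matrix.transpose_mul, Matrix.diagonal_transpose,
      Matrix.star_eq_conjTranspose, Matrix.conjTranspose_eq_transpose_of_trivial,
      Matrix.transpose_transpose, Matrix.mul_assoc]
  have hSS : S * S = M := by
    have hU := Matrix.UnitaryGroup.star_mul_self hMpsd.1.eigenvectorUnitary
    conv_rhs => rw [hMpsd.1.spectral_theorem]
    rw [hSdef, Unitary.conjStarAlgAut_apply]
    simp only [Matrix.mul_assoc]
    rw [← Matrix.mul_assoc (star _ : Matrix (Fin n) (Fin n) ℝ), hU, Matrix.one_mul,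
      ← Matrix.mul_assoc (diagonal _), diagonal_mul_diagonal]
    congr 3
    ext i
    simp [Real.mul_self_sqrt (hM.eigenvalues_pos i).le]
  set A : Matrix (Fin n) (Fin n) ℝ := Sᵀ * H * S with hA
  -- pointwise identity for the quadratic form
  have hpt : ∀ y : E n, ⟪mApp H (mApp S y), mApp S y⟫
      = dotProduct (A.mulVec ((WithLp.equiv 2 (Fin n → ℝ)) y))
        ((WithLp.equiv 2 (Fin n → ℝ)) y) := by
    intro y
    set x := (WithLp.equiv 2 (Fin n → ℝ)) y with hx
    have h1 : ⟪mApp H (mApp S y), mApp S y⟫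
        = dotProduct (H.mulVec (S.mulVec x)) (S.mulVec x) := by
      simp only [mApp, Equiv.apply_symm_apply]
      rw [PiLp.inner_apply]
      simp only [PiLp.toLp_apply, RCLike.inner_apply, conj_trivial]
      exact Finset.sum_congr rfl fun i _ => mul_comm _ _
    rw [h1, Matrix.mulVec_mulVec, dotProduct_mulVec]
    congr 1
    have hvm : ∀ v : Fin n → ℝ, v ᵥ* S = Sᵀ *ᵥ v := fun v => by
      rw [← Matrix.vecMul_transpose, Matrix.transpose_transpose]
    rw [hvm, Matrix.mulVec_mulVec, ← Matrix.mul_assoc]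
  -- integrability of the elementary pieces
  have hg_int : ∀ i j : Fin n,
      IntegrableOn (fun y : E n => y i * y j / ‖y‖ ^ α) (ball (0:E n) ρ) := by
    intro i j
    refine (aux_int npos hp1 hp2 ρ).mono' ?_ ?_
    · apply Measurable.aestronglyMeasurable
      fun_prop
    · refine MeasureTheory.ae_restrict_of_ae (MeasureTheory.ae_of_all _ fun y => ?_)
      by_cases h0 : y = 0
      · subst h0
        simp [Real.zero_rpow hp2.ne, Real.rpow_nonneg]
      · have hy : 0 < ‖y‖ := norm_pos_iff.2 h0
        rw [Real.norm_eq_abs, abs_div, abs_mul,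
          abs_of_nonneg (Real.rpow_nonneg (norm_nonneg y) α), hp, Real.rpow_sub hy]
        have h2 : ‖y‖ ^ (2:ℝ) = ‖y‖ * ‖y‖ := by
          rw [show (2:ℝ) = ((2:ℕ):ℝ) by norm_num, Real.rpow_natCast]; ring
        rw [h2]
        gcongr
        · exact aux_coord y i
        · exact aux_coord y j
  set c : Fin n → Fin n → ℝ := fun i j => ∫ y in ball (0:E n) ρ, y i * y j / ‖y‖ ^ α with hc
  -- expand the integral into a double sum
  have hI : (∫ y in ball (0 : E n) ρ, ⟪mApp H (mApp S y), mApp S y⟫ / ‖y‖ ^ α)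
      = ∑ q : Fin n × Fin n, A q.1 q.2 * c q.1 q.2 := by
    have hpt2 : ∀ y : E n, ⟪mApp H (mApp S y), mApp S y⟫ / ‖y‖ ^ α
        = ∑ q : Fin n × Fin n, A q.1 q.2 * (y q.1 * y q.2 / ‖y‖ ^ α) := by
      intro y
      rw [hpt y]
      simp only [dotProduct, Matrix.mulVec, WithLp.equiv_apply]
      rw [Fintype.sum_prod_type, Finset.sum_div]
      refine Finset.sum_congr rfl fun i _ => ?_
      rw [Finset.sum_mul, Finset.sum_div]
      refine Finset.sum_congr rfl fun j _ => ?_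
      ring
    rw [MeasureTheory.setIntegral_congr_fun measurableSet_ball fun y _ => hpt2 y]
    rw [MeasureTheory.integral_finset_sum _ fun q _ => ((hg_int q.1 q.2).const_mul _)]
    refine Finset.sum_congr rfl fun q _ => ?_
    rw [MeasureTheory.integral_const_mul]
  set i0 : Fin n := ⟨0, npos⟩ with hi0
  have hcd : ∀ i : Fin n, c i i = c i0 i0 := fun i => aux_diag α ρ i i0
  have hoff : ∀ i j : Fin n, i ≠ j → c i j = 0 := fun i j hij => aux_offdiag α ρ hij
  have hsum : ∑ q : Fin n × Fin n, A q.1 q.2 * c q.1 q.2 = A.trace * c i0 i0 := by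
    rw [Fintype.sum_prod_type]
    have hrow : ∀ i : Fin n, ∑ j : Fin n, A i j * c i j = A i i * c i0 i0 := by
      intro i
      rw [Finset.sum_eq_single_of_mem i (Finset.mem_univ i)
        (fun j _ hji => by rw [hoff i j (fun h => hji h.symm), mul_zero]), hcd i]
    rw [Finset.sum_congr rfl fun i _ => hrow i, ← Finset.sum_mul]
    congr 1
  -- diagonal value
  have hdiagsum : (n:ℝ) * c i0 i0 = ∫ y in ball (0:E n) ρ, ‖y‖ ^ p := by
    have h1 : (n:ℝ) * c i0 i0 = ∑ k : Fin n, c k k := by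
      rw [Finset.sum_congr rfl fun k _ => hcd k, Finset.sum_const, Finset.card_univ,
        Fintype.card_fin, nsmul_eq_mul]
    rw [h1, hc, ← MeasureTheory.integral_finset_sum _ fun k _ => hg_int k k]
    refine MeasureTheory.setIntegral_congr_fun measurableSet_ball fun y _ => ?_
    rw [← Finset.sum_div]
    have hyy : ∑ k : Fin n, y k * y k = ‖y‖ ^ (2:ℝ) := by
      have h := real_inner_self_eq_norm_sq y
      rw [PiLp.inner_apply] at h
      simp only [RCLike.inner_apply, conj_trivial] at h
      rw [h, show (2:ℝ) = ((2:ℕ):ℝ) by norm_num, Real.rpow_natCast]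
    rw [hyy]
    by_cases h0 : y = 0
    · subst h0
      simp [Real.zero_rpow hp2.ne, Real.zero_rpow (by rw [hα]; positivity : α ≠ 0),
        Real.zero_rpow (by norm_num : (2:ℝ) ≠ 0)]
    · have hy : 0 < ‖y‖ := norm_pos_iff.2 h0
      rw [hp, Real.rpow_sub hy]
  have hval := aux_val npos hp1 hρ
  have htr : A.trace = (M * H).trace := by
    rw [hA, hSsymm, Matrix.trace_mul_comm, ← Matrix.mul_assoc, hSS]
  have hpn : p + (n:ℝ) = 2 - 2*s := by rw [hp, hα]; ring
  have hcval : c i0 i0 = (volume (ball (0:E n) 1)).toReal * (ρ ^ (2 - 2*s) / (2 - 2*s)) := by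
    have hn0 : (n:ℝ) ≠ 0 := by positivity
    rw [hval, hpn] at hdiagsum
    exact mul_left_cancel₀ hn0 (hdiagsum.trans (by ring))
  rw [hI, hsum, htr, hcval]
  simp only [omegaN]
  ring
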